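/- Let S consist of 2n points given as n pairs {p_i, q_i} in a metric space, let T be a minimum spanning tree of S, let h be a maximum-weight edge of T, and let H_1, H_2 be the vertex sets of the two components of T after removing h. If neither H_1 nor H_2 contains both points of any pair, then the coloring R = H_1, B = H_2 is feasible and minimizes max(btCost(R'), btCost(B')) over all feasible colorings S = R' ∪ B'. -/

import Mathlib

/-!
Removing the longest edge `h` of a minimum spanning tree `T` leaves two subtrees, spanning `H₁`
and `H₂`, whose edges are no longer than `h`; hence `btCost Hᵢ ≤ |h|`. By the cut property of
minimum spanning trees, every pair of points with one in `H₁` and one in `H₂` is at distance at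
least `|h|`. A feasible coloring other than `(H₁, H₂)` and `(H₂, H₁)` has a color class meeting
both `H₁` and `H₂`, so every spanning tree of that class has an edge across the cut and its
bottleneck cost is at least `|h|`.
-/

variable {α : Type*} [MetricSpace α] [DecidableEq α]

/-- Two points are connected via the edge set `E` (edges usable in both directions). -/
def EdgeConn (E : Finset (α × α)) (x y : α) : Prop :=
  Relation.ReflTransGen (fun a b => (a, b) ∈ E ∨ (b, a) ∈ E) x y

/-- `E` is (the edge set of) a spanning tree of the complete graph on the finite
point set `X`. -/
def IsSpanningTreeOn (X : Finset α) (E : Finset (α × α)) : Prop :=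
  (∀ e ∈ E, e.1 ∈ X ∧ e.2 ∈ X) ∧ E.card + 1 = X.card ∧
    ∀ x ∈ X, ∀ y ∈ X, EdgeConn E x y

/-- The bottleneck spanning tree cost of `X`: the least `c ≥ 0` such that some
spanning tree on `X` has all edge lengths at most `c`. -/
noncomputable def btCost (X : Finset α) : ℝ :=
  sInf {c | 0 ≤ c ∧ ∃ E : Finset (α × α), IsSpanningTreeOn X E ∧ ∀ e ∈ E, dist e.1 e.2 ≤ c}


section EdgeConn

variable {V : Type*} {E F : Finset (V × V)} {x y z : V}

theorem EdgeConn.trans (hxy : EdgeConn E x y) (hyz : EdgeConn E y z) : EdgeConn E x z :=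
  Relation.ReflTransGen.trans hxy hyz

theorem EdgeConn.symm (h : EdgeConn E x y) : EdgeConn E y x :=
  have : Std.Symm fun a b : V => (a, b) ∈ E ∨ (b, a) ∈ E := ⟨fun _ _ => Or.symm⟩
  Relation.ReflTransGen.stdSymm.symm _ _ h

theorem EdgeConn.mono (hEF : E ⊆ F) (h : EdgeConn E x y) : EdgeConn F x y :=
  Relation.ReflTransGen.mono (fun _ _ => Or.imp (@hEF _) (@hEF _)) _ _ h

theorem edgeConn_of_mem {e : V × V} (he : e ∈ E) : EdgeConn E e.1 e.2 :=
  .single (.inl he)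

theorem EdgeConn.exists_crossing (p : V → Prop) (h : EdgeConn E x y) (hx : p x) (hy : ¬ p y) :
    ∃ e ∈ E, p e.1 ∧ ¬ p e.2 ∨ p e.2 ∧ ¬ p e.1 := by
  induction h with
  | refl => exact absurd hx hy
  | @tail b c _ hbc ih =>
    by_cases hb : p b
    · rcases hbc with hbc | hbc
      · exact ⟨(b, c), hbc, .inl ⟨hb, hy⟩⟩
      · exact ⟨(c, b), hbc, .inr ⟨hb, hy⟩⟩
    · exact ih hb

theorem EdgeConn.filter_of_forall_mem_iff {p : V → Prop} [DecidablePred p]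
    (hE : ∀ e ∈ E, (p e.1 ↔ p e.2)) (h : EdgeConn E x y) (hx : p x) :
    EdgeConn (E.filter fun e => p e.1 ∧ p e.2) x y := by
  induction h using Relation.ReflTransGen.head_induction_on with
  | refl => exact .refl
  | @head a b hab _ ih =>
    rcases hab with hab | hab
    · have hb : p b := (hE _ hab).1 hx
      exact .head (.inl (Finset.mem_filter.2 ⟨hab, hx, hb⟩)) (ih hb)
    · have hb : p b := (hE _ hab).2 hx
      exact .head (.inr (Finset.mem_filter.2 ⟨hab, hb, hx⟩)) (ih hb)

theorem card_le_card_add_one_of_edgeConn {X : Finset V} (hE : ∀ e ∈ E, e.1 ∈ X ∧ e.2 ∈ X)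
    (hconn : ∀ x ∈ X, ∀ y ∈ X, EdgeConn E x y) : X.card ≤ E.card + 1 := by
  classical
  rcases X.eq_empty_or_nonempty with rfl | ⟨x₀, hx₀⟩
  · simp
  let G : SimpleGraph X := .fromRel fun a b => ((a : V), (b : V)) ∈ E
  have hreach (a : X) {y : V} (h : EdgeConn E a y) (hy : y ∈ X) : G.Reachable a ⟨y, hy⟩ := by
    induction h with
    | refl => rfl
    | @tail b c _ hbc ih =>
      have hb : b ∈ X := by rcases hbc with h | h <;> simp [hE _ h]
      refine (ih hb).trans ?_
      by_cases hbc' : b = c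
      · subst hbc'; rfl
      · exact SimpleGraph.Adj.reachable ((SimpleGraph.fromRel_adj ..).2
          ⟨fun h => hbc' (congrArg Subtype.val h), hbc⟩)
  have : Nonempty X := ⟨⟨x₀, hx₀⟩⟩
  have hG : G.Connected := .mk fun a b => hreach a (hconn a a.2 b b.2) b.2
  have hedges : Nat.card G.edgeSet ≤ E.card := by
    rw [Nat.card_coe_set_eq]
    calc G.edgeSet.ncard ≤ (↑(E.image fun e => s(e.1, e.2)) : Set (Sym2 V)).ncard :=
          Set.ncard_le_ncard_of_injOn (Sym2.map Subtype.val) ?_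
            (Sym2.map.injective Subtype.val_injective).injOn
      _ ≤ E.card := (Set.ncard_coe_finset _).trans_le Finset.card_image_le
    refine Sym2.ind fun a b hab => ?_
    rcases ((SimpleGraph.fromRel_adj ..).1 ((G.mem_edgeSet).1 hab)).2 with h | h
    · exact Finset.mem_coe.2 (Finset.mem_image.2 ⟨_, h, by simp⟩)
    · exact Finset.mem_coe.2 (Finset.mem_image.2 ⟨_, h, by simp [Sym2.eq_swap]⟩)
  simpa [Nat.card_eq_finsetCard] using hG.card_vert_le_card_edgeSet_add_one.trans (by omega)

end EdgeConn

section SpanningTree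

variable {V : Type*} [DecidableEq V] {S : Finset V} {T : Finset (V × V)} {h : V × V}

theorem exists_isSpanningTreeOn {X : Finset V} (hX : X.Nonempty) :
    ∃ E, IsSpanningTreeOn X E := by
  obtain ⟨r, hr⟩ := hX
  have hstar : ∀ x ∈ X, EdgeConn ((X.erase r).image (r, ·)) r x := by
    intro x hx
    by_cases hxr : x = r
    · exact hxr ▸ .refl
    · exact edgeConn_of_mem (Finset.mem_image_of_mem _ (Finset.mem_erase.2 ⟨hxr, hx⟩))
  refine ⟨(X.erase r).image (r, ·), ?_, ?_,
    fun x hx y hy => (hstar x hx).symm.trans (hstar y hy)⟩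
  · simp only [Finset.mem_image, Finset.mem_erase]
    rintro _ ⟨x, ⟨-, hx⟩, rfl⟩
    exact ⟨hr, hx⟩
  · rw [Finset.card_image_of_injective _ (Prod.mk_right_injective r),
      Finset.card_erase_add_one hr]

theorem IsSpanningTreeOn.insert_erase {x y : V} (hT : IsSpanningTreeOn S T) (hh : h ∈ T)
    (hx : x ∈ S) (hy : y ∈ S) (hxy : (x, y) ∉ T.erase h)
    (hcover : ∀ z ∈ S, EdgeConn (T.erase h) x z ∨ EdgeConn (T.erase h) y z) :
    IsSpanningTreeOn S (insert (x, y) (T.erase h)) := by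
  have hsub : T.erase h ⊆ insert (x, y) (T.erase h) := Finset.subset_insert _ _
  have hconn : ∀ z ∈ S, EdgeConn (insert (x, y) (T.erase h)) x z := fun z hz =>
    (hcover z hz).elim (·.mono hsub) fun hyz =>
      (edgeConn_of_mem (Finset.mem_insert_self _ _)).trans (hyz.mono hsub)
  refine ⟨?_, ?_, fun a ha b hb => (hconn a ha).symm.trans (hconn b hb)⟩
  · simp only [Finset.mem_insert, forall_eq_or_imp]
    exact ⟨⟨hx, hy⟩, fun e he => hT.1 e (Finset.mem_of_mem_erase he)⟩
  · rw [Finset.card_insert_of_notMem hxy, Finset.card_erase_add_one hh, hT.2.1]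

theorem IsSpanningTreeOn.erase_filter {H₁ H₂ : Finset V} (hT : IsSpanningTreeOn S T)
    (hh : h ∈ T) (hpart : H₁ ∪ H₂ = S) (hdisj : Disjoint H₁ H₂)
    (hcomp : ∀ x ∈ S, ∀ y ∈ S,
      EdgeConn (T.erase h) x y ↔ ((x ∈ H₁ ∧ y ∈ H₁) ∨ (x ∈ H₂ ∧ y ∈ H₂))) :
    IsSpanningTreeOn H₁ ((T.erase h).filter fun e => e.1 ∈ H₁ ∧ e.2 ∈ H₁) := by
  have hside : ∀ e ∈ T.erase h, (e.1 ∈ H₁ ∧ e.2 ∈ H₁) ∨ (e.1 ∈ H₂ ∧ e.2 ∈ H₂) := fun e he =>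
    have hS := hT.1 e (Finset.mem_of_mem_erase he)
    (hcomp _ hS.1 _ hS.2).1 (edgeConn_of_mem he)
  have hiff₁ (e) (he : e ∈ T.erase h) : e.1 ∈ H₁ ↔ e.2 ∈ H₁ := by
    rcases hside e he with ⟨h1, h2⟩ | ⟨h1, h2⟩
    · exact iff_of_true h1 h2
    · exact iff_of_false (Finset.disjoint_right.1 hdisj h1) (Finset.disjoint_right.1 hdisj h2)
  have hiff₂ (e) (he : e ∈ T.erase h) : e.1 ∈ H₂ ↔ e.2 ∈ H₂ := by
    rcases hside e he with ⟨h1, h2⟩ | ⟨h1, h2⟩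
    · exact iff_of_false (Finset.disjoint_left.1 hdisj h1) (Finset.disjoint_left.1 hdisj h2)
    · exact iff_of_true h1 h2
  have hsub₁ : H₁ ⊆ S := hpart ▸ Finset.subset_union_left
  have hsub₂ : H₂ ⊆ S := hpart ▸ Finset.subset_union_right
  have hconn₁ (x) (hx : x ∈ H₁) (y) (hy : y ∈ H₁) :
      EdgeConn ((T.erase h).filter fun e => e.1 ∈ H₁ ∧ e.2 ∈ H₁) x y :=
    ((hcomp x (hsub₁ hx) y (hsub₁ hy)).2 (.inl ⟨hx, hy⟩)).filter_of_forall_mem_iff hiff₁ hx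
  have hconn₂ (x) (hx : x ∈ H₂) (y) (hy : y ∈ H₂) :
      EdgeConn ((T.erase h).filter fun e => e.1 ∈ H₂ ∧ e.2 ∈ H₂) x y :=
    ((hcomp x (hsub₂ hx) y (hsub₂ hy)).2 (.inr ⟨hx, hy⟩)).filter_of_forall_mem_iff hiff₂ hx
  have hcard₁ := card_le_card_add_one_of_edgeConn (fun e he => (Finset.mem_filter.1 he).2) hconn₁
  have hcard₂ := card_le_card_add_one_of_edgeConn (fun e he => (Finset.mem_filter.1 he).2) hconn₂
  -- Both restrictions together have at most `|T| - 1 = |H₁| + |H₂| - 2` edges, so neither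
  -- has more than a tree's worth.
  have hsplit := Finset.card_le_card (Finset.union_subset
    (Finset.filter_subset (fun e => e.1 ∈ H₁ ∧ e.2 ∈ H₁) (T.erase h))
    (Finset.filter_subset (fun e => e.1 ∈ H₂ ∧ e.2 ∈ H₂) _))
  rw [Finset.card_union_of_disjoint (Finset.disjoint_filter.2 fun e _ h1 h2 =>
    Finset.disjoint_left.1 hdisj h1.1 h2.1)] at hsplit
  have hTcard := Finset.card_erase_add_one hh
  have hScard := Finset.card_union_of_disjoint hdisj
  rw [hpart, ← hT.2.1] at hScard
  exact ⟨fun e he => (Finset.mem_filter.1 he).2, by omega, hconn₁⟩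

end SpanningTree

section Bottleneck

variable {M : Type*} [MetricSpace M] {S X : Finset M} {T E : Finset (M × M)} {c : ℝ}

theorem btCost_le (hE : IsSpanningTreeOn X E) (hc : 0 ≤ c) (hd : ∀ e ∈ E, dist e.1 e.2 ≤ c) :
    btCost X ≤ c :=
  csInf_le ⟨0, fun _ hb => hb.1⟩ ⟨hc, E, hE, hd⟩

theorem le_btCost [DecidableEq M] (hX : X.Nonempty)
    (h : ∀ E, IsSpanningTreeOn X E → ∃ e ∈ E, c ≤ dist e.1 e.2) : c ≤ btCost X := by
  obtain ⟨E, hE⟩ := exists_isSpanningTreeOn hX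
  refine le_csInf ⟨∑ e ∈ E, dist e.1 e.2, Finset.sum_nonneg fun _ _ => dist_nonneg, E, hE,
    fun e he => Finset.single_le_sum (fun _ _ => dist_nonneg) he⟩ ?_
  rintro c' ⟨-, E', hE', hc'⟩
  obtain ⟨e, he, hce⟩ := h E' hE'
  exact hce.trans (hc' e he)

-- Every spanning tree of `X` has an edge from `p` to `¬ p`, since it connects `a` to `b`.
theorem le_btCost_of_separated [DecidableEq M] (p : M → Prop) {a b : M} (ha : a ∈ X) (hb : b ∈ X)
    (hpa : p a) (hpb : ¬ p b) (hsep : ∀ x ∈ X, ∀ y ∈ X, p x → ¬ p y → c ≤ dist x y) :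
    c ≤ btCost X := by
  refine le_btCost ⟨a, ha⟩ fun E hE => ?_
  obtain ⟨e, he, hcross⟩ := (hE.2.2 a ha b hb).exists_crossing p hpa hpb
  have heX := hE.1 e he
  refine ⟨e, he, ?_⟩
  rcases hcross with ⟨h1, h2⟩ | ⟨h1, h2⟩
  · exact hsep _ heX.1 _ heX.2 h1 h2
  · exact dist_comm e.1 e.2 ▸ hsep _ heX.2 _ heX.1 h1 h2

theorem dist_le_of_minimal [DecidableEq M] {h : M × M} {x y : M} (hT : IsSpanningTreeOn S T)
    (hTmin : ∀ E, IsSpanningTreeOn S E → ∑ e ∈ T, dist e.1 e.2 ≤ ∑ e ∈ E, dist e.1 e.2)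
    (hh : h ∈ T) (hx : x ∈ S) (hy : y ∈ S) (hxy : (x, y) ∉ T.erase h)
    (hcover : ∀ z ∈ S, EdgeConn (T.erase h) x z ∨ EdgeConn (T.erase h) y z) :
    dist h.1 h.2 ≤ dist x y := by
  have := hTmin _ (hT.insert_erase hh hx hy hxy hcover)
  rw [Finset.sum_insert hxy, ← Finset.add_sum_erase T _ hh] at this
  linarith

end Bottleneck

section Components

variable {M : Type*} [MetricSpace M] [DecidableEq M] {S H₁ H₂ : Finset M} {T : Finset (M × M)}
  {h : M × M}

theorem dist_le_of_mem_of_notMem (hT : IsSpanningTreeOn S T)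
    (hTmin : ∀ E, IsSpanningTreeOn S E → ∑ e ∈ T, dist e.1 e.2 ≤ ∑ e ∈ E, dist e.1 e.2)
    (hh : h ∈ T) (hpart : H₁ ∪ H₂ = S) (hdisj : Disjoint H₁ H₂)
    (hcomp : ∀ x ∈ S, ∀ y ∈ S,
      EdgeConn (T.erase h) x y ↔ ((x ∈ H₁ ∧ y ∈ H₁) ∨ (x ∈ H₂ ∧ y ∈ H₂)))
    {x y : M} (hx₁ : x ∈ H₁) (hy : y ∈ S) (hy₁ : y ∉ H₁) : dist h.1 h.2 ≤ dist x y := by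
  have hx : x ∈ S := hpart ▸ Finset.mem_union_left _ hx₁
  have hy₂ : y ∈ H₂ := (Finset.mem_union.1 (hpart ▸ hy)).resolve_left hy₁
  have hx₂ : x ∉ H₂ := Finset.disjoint_left.1 hdisj hx₁
  refine dist_le_of_minimal hT hTmin hh hx hy (fun hxy => ?_) fun z hz => ?_
  · have := (hcomp x hx y hy).1 (edgeConn_of_mem hxy)
    tauto
  · rcases Finset.mem_union.1 (hpart ▸ hz) with hz₁ | hz₂
    · exact .inl ((hcomp x hx z hz).2 (.inl ⟨hx₁, hz₁⟩))
    · exact .inr ((hcomp y hy z hz).2 (.inr ⟨hy₂, hz₂⟩))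

theorem btCost_le_of_components (hT : IsSpanningTreeOn S T) (hh : h ∈ T)
    (hmax : ∀ e ∈ T, dist e.1 e.2 ≤ dist h.1 h.2) (hpart : H₁ ∪ H₂ = S) (hdisj : Disjoint H₁ H₂)
    (hcomp : ∀ x ∈ S, ∀ y ∈ S,
      EdgeConn (T.erase h) x y ↔ ((x ∈ H₁ ∧ y ∈ H₁) ∨ (x ∈ H₂ ∧ y ∈ H₂))) :
    btCost H₁ ≤ dist h.1 h.2 :=
  btCost_le (hT.erase_filter hh hpart hdisj hcomp) dist_nonneg fun e he =>
    hmax e (Finset.mem_of_mem_erase (Finset.mem_filter.1 he).1)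

end Components

section Coloring

variable {ι β : Type*} [Fintype ι] [DecidableEq β] {pts : ι × Bool → β}

theorem eq_image_of_mem_iff {H : Finset β} {σ : ι → Bool} (hH : H ⊆ Finset.univ.image pts)
    (hmem : ∀ i b, pts (i, b) ∈ H ↔ b = σ i) : H = Finset.univ.image fun i => pts (i, σ i) := by
  ext x
  simp only [Finset.mem_image, Finset.mem_univ, true_and]
  constructor
  · intro hx
    obtain ⟨⟨i, b⟩, -, rfl⟩ := Finset.mem_image.1 (hH hx)
    exact ⟨i, (hmem i b).1 hx ▸ rfl⟩
  · rintro ⟨i, rfl⟩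
    exact (hmem i _).2 rfl

theorem exists_eq_image_of_forall_not_pair {H₁ H₂ : Finset β}
    (hunion : H₁ ∪ H₂ = Finset.univ.image pts) (hdisj : Disjoint H₁ H₂)
    (hno₁ : ∀ i, ¬ (pts (i, false) ∈ H₁ ∧ pts (i, true) ∈ H₁))
    (hno₂ : ∀ i, ¬ (pts (i, false) ∈ H₂ ∧ pts (i, true) ∈ H₂)) :
    ∃ σ : ι → Bool, H₁ = Finset.univ.image (fun i => pts (i, σ i)) ∧
      H₂ = Finset.univ.image (fun i => pts (i, !(σ i))) := by
  have hcover (p) : pts p ∈ H₁ ∨ pts p ∈ H₂ :=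
    Finset.mem_union.1 (hunion ▸ Finset.mem_image_of_mem _ (Finset.mem_univ p))
  have hmem₂ (p) : pts p ∈ H₂ ↔ pts p ∉ H₁ :=
    ⟨fun h₂ h₁ => Finset.disjoint_left.1 hdisj h₁ h₂, (hcover p).resolve_left⟩
  have hmem₁ (i b) : pts (i, b) ∈ H₁ ↔ b = decide (pts (i, true) ∈ H₁) := by
    have := hcover (i, false)
    have := hno₁ i
    have := hno₂ i
    cases b <;> by_cases pts (i, true) ∈ H₁ <;> simp_all
  refine ⟨_, eq_image_of_mem_iff (hunion ▸ Finset.subset_union_left) hmem₁,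
    eq_image_of_mem_iff (hunion ▸ Finset.subset_union_right) fun i b => ?_⟩
  rw [hmem₂, hmem₁]
  cases b <;> simp

end Coloring

theorem Bool.eq_or_eq_not_or_exists {ι : Type*} (σ τ : ι → Bool) :
    σ = τ ∨ σ = (fun i => !τ i) ∨ ∃ i j, σ i = τ i ∧ σ j = !τ j := by
  by_cases h₁ : ∀ i, σ i = τ i
  · exact .inl (funext h₁)
  by_cases h₂ : ∀ i, σ i = !τ i
  · exact .inr (.inl (funext h₂))
  obtain ⟨i, hi⟩ := not_forall.1 h₂
  obtain ⟨j, hj⟩ := not_forall.1 h₁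
  exact .inr (.inr ⟨i, j, by simpa using hi, Bool.eq_not_of_ne hj⟩)

theorem bottleneck_component_coloring_optimal_general
    (n : ℕ)
    (pts : Fin n × Bool → α)
    (S : Finset α) (hS : S = Finset.image pts Finset.univ)
    (T : Finset (α × α)) (hT : IsSpanningTreeOn S T)
    (hTmin : ∀ E : Finset (α × α), IsSpanningTreeOn S E →
      (∑ e ∈ T, dist e.1 e.2) ≤ ∑ e ∈ E, dist e.1 e.2)
    (h : α × α) (hh : h ∈ T) (hmax : ∀ e ∈ T, dist e.1 e.2 ≤ dist h.1 h.2)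
    (H₁ H₂ : Finset α) (hpart : H₁ ∪ H₂ = S) (hdisj : Disjoint H₁ H₂)
    (hcomp : ∀ x ∈ S, ∀ y ∈ S,
      EdgeConn (T.erase h) x y ↔ ((x ∈ H₁ ∧ y ∈ H₁) ∨ (x ∈ H₂ ∧ y ∈ H₂)))
    (hnopairH₁ : ∀ i : Fin n, ¬ (pts (i, false) ∈ H₁ ∧ pts (i, true) ∈ H₁))
    (hnopairH₂ : ∀ i : Fin n, ¬ (pts (i, false) ∈ H₂ ∧ pts (i, true) ∈ H₂)) :
    (∃ σ : Fin n → Bool,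
      H₁ = Finset.image (fun i => pts (i, σ i)) Finset.univ ∧
      H₂ = Finset.image (fun i => pts (i, !(σ i))) Finset.univ) ∧
    ∀ σ : Fin n → Bool,
      max (btCost H₁) (btCost H₂) ≤
        max (btCost (Finset.image (fun i => pts (i, σ i)) Finset.univ))
            (btCost (Finset.image (fun i => pts (i, !(σ i))) Finset.univ)) := by
  have hpts (p) : pts p ∈ S := hS ▸ Finset.mem_image_of_mem _ (Finset.mem_univ p)
  obtain ⟨τ, hH₁, hH₂⟩ :=
    exists_eq_image_of_forall_not_pair (hpart.trans hS) hdisj hnopairH₁ hnopairH₂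
  have hbt : max (btCost H₁) (btCost H₂) ≤ dist h.1 h.2 :=
    max_le (btCost_le_of_components hT hh hmax hpart hdisj hcomp)
      (btCost_le_of_components hT hh hmax ((Finset.union_comm _ _).trans hpart) hdisj.symm
        fun x hx y hy => (hcomp x hx y hy).trans or_comm)
  refine ⟨⟨τ, hH₁, hH₂⟩, fun σ => ?_⟩
  rcases Bool.eq_or_eq_not_or_exists σ τ with rfl | rfl | ⟨i, j, hi, hj⟩
  · rw [← hH₁, ← hH₂]
  · simp only [Bool.not_not]
    rw [← hH₁, ← hH₂, max_comm]
  have hR {k : Fin n} : pts (k, σ k) ∈ Finset.univ.image fun i => pts (i, σ i) :=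
    Finset.mem_image_of_mem _ (Finset.mem_univ k)
  have hi₁ : pts (i, σ i) ∈ H₁ := by
    rw [hH₁, hi]; exact Finset.mem_image_of_mem _ (Finset.mem_univ i)
  have hj₁ : pts (j, σ j) ∉ H₁ := Finset.disjoint_right.1 hdisj <| by
    rw [hH₂, hj]; exact Finset.mem_image_of_mem _ (Finset.mem_univ j)
  refine hbt.trans (le_max_of_le_left (le_btCost_of_separated (· ∈ H₁) hR hR hi₁ hj₁ ?_))
  simp only [Finset.mem_image, Finset.mem_univ, true_and]
  rintro _ - _ ⟨k, rfl⟩ hx₁ hy₁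
  exact dist_le_of_mem_of_notMem hT hTmin hh hpart hdisj hcomp hx₁ (hpts _) hy₁

/-- `S` consists of `n` pairs `{pts (i, false), pts (i, true)}`. Let `T` be
a minimum spanning tree of `S` (minimizing total edge length), `h` a maximum-weight edge
of `T`, and `H₁, H₂` the vertex sets of the two components of `T` after removing `h`.
If neither `H₁` nor `H₂` contains both points of any pair, then the coloring
`R = H₁, B = H₂` is feasible and minimizes `max (btCost R') (btCost B')` over all
feasible colorings. -/
theorem bottleneck_component_coloring_optimal
    (n : ℕ) (hn : 1 ≤ n)
    (pts : Fin n × Bool → α) (hinj : Function.Injective pts)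
    (S : Finset α) (hS : S = Finset.image pts Finset.univ)
    (T : Finset (α × α)) (hT : IsSpanningTreeOn S T)
    (hTmin : ∀ E : Finset (α × α), IsSpanningTreeOn S E →
      (∑ e ∈ T, dist e.1 e.2) ≤ ∑ e ∈ E, dist e.1 e.2)
    (h : α × α) (hh : h ∈ T) (hmax : ∀ e ∈ T, dist e.1 e.2 ≤ dist h.1 h.2)
    (H₁ H₂ : Finset α) (hpart : H₁ ∪ H₂ = S) (hdisj : Disjoint H₁ H₂)
    (hne1 : H₁.Nonempty) (hne2 : H₂.Nonempty)
    (hcomp : ∀ x ∈ S, ∀ y ∈ S,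
      EdgeConn (T.erase h) x y ↔ ((x ∈ H₁ ∧ y ∈ H₁) ∨ (x ∈ H₂ ∧ y ∈ H₂)))
    (hnopairH₁ : ∀ i : Fin n, ¬ (pts (i, false) ∈ H₁ ∧ pts (i, true) ∈ H₁))
    (hnopairH₂ : ∀ i : Fin n, ¬ (pts (i, false) ∈ H₂ ∧ pts (i, true) ∈ H₂)) :
    (∃ σ : Fin n → Bool,
      H₁ = Finset.image (fun i => pts (i, σ i)) Finset.univ ∧
      H₂ = Finset.image (fun i => pts (i, !(σ i))) Finset.univ) ∧
    ∀ σ : Fin n → Bool,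
      max (btCost H₁) (btCost H₂) ≤
        max (btCost (Finset.image (fun i => pts (i, σ i)) Finset.univ))
            (btCost (Finset.image (fun i => pts (i, !(σ i))) Finset.univ)) :=
  bottleneck_component_coloring_optimal_general n pts S hS T hT hTmin h hh hmax H₁ H₂ hpart hdisj
    hcomp hnopairH₁ hnopairH₂
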